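/- arXiv:1801.02532 — 8 statements merged into one kernel-verified Lean document; each statement's English description precedes it below -/
import Mathlib

section
/- For the graph G formed by taking the complete graph K_{n+1} and removing n-m disjoint edges (where (n-1)/2 < m ≤ n), the specialty S(G) = Σ_{uv∈E(G)} min(deg u, deg v) equals n·C(n,2) + m(2m-n). -/
open scoped Classical
open Finset

/-- The specialty of a graph: sum over edges of the min of the endpoint degrees. -/
noncomputable def specialty {V : Type*} [Fintype V] (G : SimpleGraph V) : ℕ :=
  ∑ e ∈ G.edgeFinset,
    Sym2.lift ⟨fun u v => min (G.degree u) (G.degree v),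
      fun u v => min_comm (G.degree u) (G.degree v)⟩ e

/-- `K_{n+1}` with the `n - m` disjoint edges `{2i, 2i+1}`, `i < n - m`, removed. -/
def cliqueMinusMatching (n m : ℕ) : SimpleGraph (Fin (n + 1)) where
  Adj u v := u ≠ v ∧ ¬((u : ℕ) / 2 = (v : ℕ) / 2 ∧ (u : ℕ) / 2 < n - m)
  symm := by
    constructor
    intro u v ⟨h1, h2⟩
    exact ⟨h1.symm, fun ⟨a, b⟩ => h2 ⟨a.symm, a ▸ b⟩⟩
  loopless := by constructor; intro u ⟨h, _⟩; exact h rfl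

/-!
Every vertex of `K_{n+1}` minus `k = n - m` disjoint edges has degree `n - 1` (the `2k` matched
vertices) or `n` (the universal ones). Double counting over darts,
`2 S = ∑_v ∑_{u ~ v} min(d v, d u)`; the inner sum is `(n - 1)²` at a matched vertex and
`∑_u d u - n` at a universal one, since a universal vertex has maximal degree and sees every
other vertex.
-/

namespace SimpleGraph

variable {V : Type*} [Fintype V] (G : SimpleGraph V)

theorem sum_darts_edge [DecidableRel G.Adj] {M : Type*} [AddCommMonoid M] (f : Sym2 V → M) :
    ∑ d : G.Dart, f d.edge = 2 • ∑ e ∈ G.edgeFinset, f e := by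
  rw [← sum_fiberwise_of_maps_to (g := Dart.edge) (t := G.edgeFinset)
      (fun d _ => mem_edgeFinset.mpr d.edge_mem), smul_sum]
  refine sum_congr rfl fun e he => ?_
  rw [sum_congr rfl fun d hd => congrArg f (mem_filter.mp hd).2, sum_const,
    G.dart_edge_fiber_card e (mem_edgeFinset.mp he)]

theorem sum_darts_fst_snd [DecidableRel G.Adj] [DecidableEq V] {M : Type*} [AddCommMonoid M]
    (g : V → V → M) :
    ∑ d : G.Dart, g d.fst d.snd = ∑ v, ∑ u ∈ G.neighborFinset v, g v u := by
  rw [← sum_fiberwise_of_maps_to (g := fun d : G.Dart => d.fst) (t := univ)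
    (fun _ _ => mem_univ _)]
  refine sum_congr rfl fun v _ => ?_
  rw [G.dart_fst_fiber v, sum_image fun _ _ _ _ h => G.dartOfNeighborSet_injective v h]
  exact (sum_subtype _ (fun u => G.mem_neighborFinset v u) (g v)).symm

theorem two_mul_specialty :
    2 * specialty G = ∑ v, ∑ u ∈ G.neighborFinset v, min (G.degree v) (G.degree u) := by
  rw [specialty, ← smul_eq_mul, ← sum_darts_edge, ← sum_darts_fst_snd]
  rfl

variable {G} [DecidableEq V] (L : Finset V) {δ : ℕ} (hL : ∀ v ∈ L, G.degree v = δ)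
  (hLc : ∀ v ∉ L, G.IsUniversal v)
include hL hLc

theorem sum_degree_of_forall_isUniversal :
    ∑ u, G.degree u = #L * δ + #Lᶜ * (Fintype.card V - 1) := by
  rw [← sum_add_sum_compl L, sum_congr rfl hL,
    sum_congr rfl fun v hv => (G.degree_eq_card_sub_one v).mpr (hLc v (mem_compl.mp hv)),
    sum_const, sum_const, smul_eq_mul, smul_eq_mul]

theorem two_mul_specialty_add_of_forall_isUniversal :
    2 * specialty G + #Lᶜ * (Fintype.card V - 1) = #L * δ ^ 2 + #Lᶜ * ∑ u, G.degree u := by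
  have degree_compl v (hv : v ∉ L) : G.degree v = Fintype.card V - 1 :=
    (G.degree_eq_card_sub_one v).mpr (hLc v hv)
  have degree_le u : G.degree u ≤ Fintype.card V - 1 := by
    have := G.degree_lt_card_verts u
    omega
  have inner_mem :
      ∀ v ∈ L, ∑ u ∈ G.neighborFinset v, min (G.degree v) (G.degree u) = δ ^ 2 := by
    intro v hv
    have min_eq u : min (G.degree v) (G.degree u) = δ := by
      by_cases hu : u ∈ L
      · rw [hL v hv, hL u hu, min_self]
      · rw [degree_compl u hu, ← hL v hv, min_eq_left (degree_le v)]
    rw [sum_congr rfl fun u _ => min_eq u, sum_const, card_neighborFinset_eq_degree, hL v hv,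
      smul_eq_mul, sq]
  have inner_not_mem : ∀ v ∉ L, ∑ u ∈ G.neighborFinset v, min (G.degree v) (G.degree u)
      + (Fintype.card V - 1) = ∑ u, G.degree u := by
    intro v hv
    have min_eq u : min (G.degree v) (G.degree u) = G.degree u := by
      rw [degree_compl v hv, min_eq_right (degree_le u)]
    rw [sum_congr rfl fun u _ => min_eq u, (G.neighborFinset_eq_erase_univ v).mpr (hLc v hv),
      ← degree_compl v hv, sum_erase_add _ _ (mem_univ v)]
  rw [two_mul_specialty, ← sum_add_sum_compl L, sum_congr rfl inner_mem, sum_const, smul_eq_mul,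
    add_assoc, ← smul_eq_mul (a := #Lᶜ), ← sum_const, ← sum_add_distrib,
    sum_congr rfl fun v hv => inner_not_mem v (mem_compl.mp hv), sum_const, smul_eq_mul]

end SimpleGraph

namespace cliqueMinusMatching

variable {n m : ℕ}

theorem isUniversal_of_le {v : Fin (n + 1)} (hv : n - m ≤ (v : ℕ) / 2) :
    (cliqueMinusMatching n m).IsUniversal v := fun w hvw =>
  ⟨hvw, fun h => by omega⟩

-- `2 * (v / 2) + (1 - v % 2)` is the partner `v xor 1` of `v` in the removed matching.
theorem neighborFinset_of_lt (h : n ≤ 2 * m) {v : Fin (n + 1)} (hv : (v : ℕ) / 2 < n - m) :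
    (cliqueMinusMatching n m).neighborFinset v =
      (univ.erase v).erase ⟨2 * ((v : ℕ) / 2) + (1 - (v : ℕ) % 2), by omega⟩ := by
  ext u
  simp only [SimpleGraph.mem_neighborFinset, mem_erase, mem_univ, and_true, ne_eq, Fin.ext_iff]
  change v ≠ u ∧ _ ↔ _
  rw [ne_eq, Fin.ext_iff]
  omega

theorem degree_of_lt (h : n ≤ 2 * m) {v : Fin (n + 1)} (hv : (v : ℕ) / 2 < n - m) :
    (cliqueMinusMatching n m).degree v = n - 1 := by
  rw [← SimpleGraph.card_neighborFinset_eq_degree, neighborFinset_of_lt h hv,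
    card_erase_of_mem, card_erase_of_mem (mem_univ v), card_univ, Fintype.card_fin,
    Nat.add_sub_cancel]
  simp only [mem_erase, ne_eq, Fin.ext_iff, mem_univ, and_true]
  omega

theorem card_filter_div_two_lt (h : n ≤ 2 * m) :
    #{v : Fin (n + 1) | (v : ℕ) / 2 < n - m} = 2 * (n - m) := by
  have : #{v : Fin (n + 1) | (v : ℕ) / 2 < n - m} =
      #{v : Fin (n + 1) | (v : ℕ) < 2 * (n - m)} := by
    congr 1
    ext v
    simp only [mem_filter, mem_univ, true_and]
    omega
  rw [this, Fin.card_filter_val_lt]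
  omega

end cliqueMinusMatching

theorem specialty_cliqueMinusMatching (n m : ℕ) (hm : 1 ≤ m) (h1 : n ≤ 2 * m)
    (h2 : m ≤ n) :
    (specialty (cliqueMinusMatching n m) : ℤ) =
      n * n.choose 2 + m * (2 * m - n) := by
  set L : Finset (Fin (n + 1)) := {v | (v : ℕ) / 2 < n - m}
  have hL : ∀ v ∈ L, (cliqueMinusMatching n m).degree v = n - 1 := fun v hv =>
    cliqueMinusMatching.degree_of_lt h1 (mem_filter.mp hv).2
  have hLc : ∀ v ∉ L, (cliqueMinusMatching n m).IsUniversal v := fun v hv =>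
    cliqueMinusMatching.isUniversal_of_le
      (not_lt.mp fun h => hv (mem_filter.mpr ⟨mem_univ v, h⟩))
  have hcard : #L = 2 * (n - m) := cliqueMinusMatching.card_filter_div_two_lt h1
  have key := SimpleGraph.two_mul_specialty_add_of_forall_isUniversal L hL hLc
  rw [SimpleGraph.sum_degree_of_forall_isUniversal L hL hLc, card_compl, hcard, Fintype.card_fin,
    Nat.add_sub_cancel] at key
  have hchoose : 2 * n.choose 2 = n * (n - 1) := by
    rw [Nat.choose_two_right, Nat.mul_div_cancel' (Nat.even_mul_pred_self n).two_dvd]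
  zify [show 1 ≤ n by omega, h2, show 2 * (n - m) ≤ n + 1 by omega] at key hchoose
  refine mul_left_cancel₀ (two_ne_zero (α := ℤ)) ?_
  linear_combination key - n * hchoose
end

section
/- Let G be the graph on n+1 vertices consisting of: (a) a set A of 2m vertices forming a clique missing m disjoint edges (a perfect matching removed), (b) a set B of n-2m vertices forming a clique with every vertex of B joined to every vertex of A, and (c) a single extra vertex joined to all of A and none of B, where 1 ≤ m ≤ (n-1)/2. Then S(G) = (n-1)·C(n,2) + m(4m-n+1). -/
/-!
Every vertex other than the extra vertex `n` has degree `n - 1`: it misses only itself and its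
matching partner (in `A`) or the extra vertex (in `B`). The extra vertex has degree `2m ≤ n - 1`.
So an edge contributes `2m` when it meets the extra vertex and `n - 1` otherwise, and the
handshake lemma gives `C(n,2) + m` edges in total.
-/

open scoped Classical
open Finset

/-- The graph on `n+1` vertices consisting of: a set `A` of `2m` vertices (those with
value `< 2m`) forming a clique missing the perfect matching `{2i, 2i+1}`, a set `B` of
`n - 2m` vertices (values in `[2m, n)`) forming a clique completely joined to `A`, and
one extra vertex (the vertex `n`) joined to all of `A` and none of `B`. -/
def threePartGraph (n m : ℕ) : SimpleGraph (Fin (n + 1)) where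
  Adj u v := u ≠ v ∧
    ¬((u : ℕ) < 2 * m ∧ (v : ℕ) < 2 * m ∧ (u : ℕ) / 2 = (v : ℕ) / 2) ∧
    ¬((u : ℕ) = n ∧ 2 * m ≤ (v : ℕ) ∧ (v : ℕ) < n) ∧
    ¬((v : ℕ) = n ∧ 2 * m ≤ (u : ℕ) ∧ (u : ℕ) < n)
  symm := by constructor; intro u v ⟨h1, h2, h3, h4⟩; exact ⟨h1.symm, by tauto⟩
  loopless := by constructor; intro u ⟨h, _⟩; exact h rfl

namespace SimpleGraph

variable {V : Type*} [Fintype V] (G : SimpleGraph V) {v : V} {d : ℕ}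

theorem degree_eq_card_sub_two_of_adj_iff {w : V} (hwv : w ≠ v)
    (h : ∀ u, G.Adj v u ↔ u ≠ v ∧ u ≠ w) : G.degree v = Fintype.card V - 2 := by
  have hN : G.neighborFinset v = (univ.erase v).erase w := by
    ext u
    simp [h, and_comm]
  rw [← card_neighborFinset_eq_degree, hN, card_erase_of_mem (by simpa using hwv),
    card_erase_of_mem (mem_univ v), card_univ]
  omega

section OneExceptionalVertex

variable (hv : G.degree v ≤ d) (h : ∀ w ≠ v, G.degree w = d)
include h

theorem two_mul_card_edgeFinset_add_of_degree_eq :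
    2 * #G.edgeFinset + d = G.degree v + Fintype.card V * d := by
  rw [← sum_degrees_eq_twice_card_edges, ← card_univ, ← smul_eq_mul, ← sum_const,
    ← add_sum_erase _ _ (mem_univ v), ← add_sum_erase _ _ (mem_univ v),
    sum_congr rfl fun w hw => h w (ne_of_mem_erase hw)]
  ring

include hv

theorem lift_min_degree_eq_of_degree_eq {e : Sym2 V} (he : e ∈ G.edgeFinset) :
    Sym2.lift ⟨fun a b => min (G.degree a) (G.degree b),
      fun a b => min_comm (G.degree a) (G.degree b)⟩ e = if v ∈ e then G.degree v else d := by
  induction e using Sym2.ind with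
  | _ a b =>
    have hab : a ≠ b := (mem_edgeFinset.mp he).ne
    simp only [Sym2.lift_mk, Sym2.mem_iff]
    by_cases ha : a = v
    · subst ha
      simp [h b hab.symm, hv]
    · by_cases hb : b = v
      · subst hb
        simp [h a ha, hv, Ne.symm ha]
      · simp [h a ha, h b hb, Ne.symm ha, Ne.symm hb]

/-- `specialty G = deg v ^ 2 + d * (#E - deg v)`, stated additively to avoid truncated
subtraction. -/
theorem specialty_add_mul_degree_of_degree_eq :
    specialty G + d * G.degree v = G.degree v * G.degree v + d * #G.edgeFinset := by
  have hinc : #(G.edgeFinset.filter (v ∈ ·)) = G.degree v := by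
    rw [← incidenceFinset_eq_filter, card_incidenceFinset_eq_degree]
  have hsplit := card_filter_add_card_filter_not (s := G.edgeFinset) (v ∈ ·)
  rw [specialty, sum_congr rfl fun e he => G.lift_min_degree_eq_of_degree_eq hv h he,
    sum_ite, sum_const, sum_const, smul_eq_mul, smul_eq_mul, hinc, ← hsplit, hinc]
  ring

end OneExceptionalVertex

end SimpleGraph

section threePartGraph

variable {n m : ℕ}

theorem threePartGraph_adj_iff {u v : Fin (n + 1)} :
    (threePartGraph n m).Adj u v ↔ (u : ℕ) ≠ v ∧
      ¬((u : ℕ) < 2 * m ∧ (v : ℕ) < 2 * m ∧ (u : ℕ) / 2 = (v : ℕ) / 2) ∧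
      ¬((u : ℕ) = n ∧ 2 * m ≤ (v : ℕ) ∧ (v : ℕ) < n) ∧
      ¬((v : ℕ) = n ∧ 2 * m ≤ (u : ℕ) ∧ (u : ℕ) < n) := by
  simp [threePartGraph, Fin.ext_iff]

theorem threePartGraph_degree_last (hmn : 2 * m ≤ n) :
    (threePartGraph n m).degree (Fin.last n) = 2 * m := by
  have hN : (threePartGraph n m).neighborFinset (Fin.last n) = Iio ⟨2 * m, by omega⟩ := by
    ext u
    simp only [SimpleGraph.mem_neighborFinset, threePartGraph_adj_iff, Fin.val_last, mem_Iio,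
      Fin.lt_def, true_and]
    have := u.isLt
    omega
  rw [← SimpleGraph.card_neighborFinset_eq_degree, hN, Fin.card_Iio]

theorem threePartGraph_degree_of_ne_last (hmn : 2 * m ≤ n) {v : Fin (n + 1)}
    (hv : v ≠ Fin.last n) : (threePartGraph n m).degree v = n - 1 := by
  have hvn : (v : ℕ) < n := Fin.val_lt_last hv
  obtain ⟨w, hwv, hw⟩ : ∃ w ≠ v, ∀ u, (threePartGraph n m).Adj v u ↔ u ≠ v ∧ u ≠ w := by
    by_cases hA : (v : ℕ) < 2 * m
    · refine ⟨⟨2 * (v / 2) + 1 - v % 2, by omega⟩, by simp [Fin.ext_iff]; omega, fun u => ?_⟩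
      simp only [threePartGraph_adj_iff, ne_eq, Fin.ext_iff]
      omega
    · refine ⟨Fin.last n, hv.symm, fun u => ?_⟩
      simp only [threePartGraph_adj_iff, ne_eq, Fin.ext_iff, Fin.val_last]
      omega
  rw [(threePartGraph n m).degree_eq_card_sub_two_of_adj_iff hwv hw, Fintype.card_fin]
  omega

end threePartGraph

theorem specialty_threePartGraph_general (n m : ℕ) (hmn : 2 * m + 1 ≤ n) :
    (specialty (threePartGraph n m) : ℤ) =
      (n - 1) * n.choose 2 + m * (4 * m - n + 1) := by
  have hlast := threePartGraph_degree_last (m := m) (by omega : 2 * m ≤ n)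
  have hrest : ∀ w ≠ Fin.last n, (threePartGraph n m).degree w = n - 1 :=
    fun w => threePartGraph_degree_of_ne_last (by omega)
  have hS := (threePartGraph n m).specialty_add_mul_degree_of_degree_eq
    (hlast.trans_le (by omega)) hrest
  have hE := (threePartGraph n m).two_mul_card_edgeFinset_add_of_degree_eq hrest
  have hC : n.choose 2 * 2 = n * (n - 1) := by
    rw [Nat.choose_two_right, Nat.div_two_mul_two_of_even (Nat.even_mul_pred_self n)]
  rw [hlast] at hS hE
  rw [Fintype.card_fin] at hE
  zify [(by omega : 1 ≤ n)] at hS hE hC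
  have hE' : (#(threePartGraph n m).edgeFinset : ℤ) = n.choose 2 + m := by linarith
  linear_combination hS + (n - 1 : ℤ) * hE'

theorem specialty_threePartGraph (n m : ℕ) (hm : 1 ≤ m) (hmn : 2 * m + 1 ≤ n) :
    (specialty (threePartGraph n m) : ℤ) =
      (n - 1) * n.choose 2 + m * (4 * m - n + 1) :=
  specialty_threePartGraph_general n m hmn
end

section
/- If m > (n-1)/2, then every simple graph with n+1 vertices and C(n,2)+m edges contains a universal vertex, i.e., a vertex adjacent to all other vertices. -/
/-!
If no vertex is universal, every vertex has a neighbour in the complement `Gᶜ`, so by the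
handshake lemma `Gᶜ` has at least `(n + 1) / 2` edges. But `G` and `Gᶜ` together have
`(n + 1).choose 2 = n.choose 2 + n` edges, so `Gᶜ` has exactly `n - m` of them, and
`2 * (n - m) ≥ n + 1` contradicts `n ≤ 2 * m`.
-/

open scoped Classical
open Finset

namespace SimpleGraph

variable {V : Type*} [Fintype V] (G : SimpleGraph V)

theorem card_edgeFinset_add_card_edgeFinset_compl [DecidableEq V] [Fintype G.edgeSet]
    [Fintype Gᶜ.edgeSet] :
    #G.edgeFinset + #Gᶜ.edgeFinset = (Fintype.card V).choose 2 := by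
  rw [← card_union_of_disjoint (disjoint_edgeFinset.mpr disjoint_compl_right), ← edgeFinset_sup,
    ← card_edgeFinset_top_eq_card_choose_two]
  congr! 2
  exact sup_compl_eq_top

theorem card_le_two_mul_card_edgeFinset_of_forall_degree_pos [DecidableRel G.Adj]
    (h : ∀ v, 0 < G.degree v) : Fintype.card V ≤ 2 * #G.edgeFinset := by
  rw [← sum_degrees_eq_twice_card_edges, ← card_univ, card_eq_sum_ones]
  exact sum_le_sum fun v _ => h v

end SimpleGraph

theorem exists_universal_vertex_general (n m : ℕ)
    (hhalf : n ≤ 2 * m) (G : SimpleGraph (Fin (n + 1)))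
    (hcard : G.edgeFinset.card = n.choose 2 + m) :
    ∃ v : Fin (n + 1), ∀ w : Fin (n + 1), w ≠ v → G.Adj v w := by
  by_contra! h
  have hpos : ∀ v, 0 < Gᶜ.degree v := fun v =>
    let ⟨w, hne, hnadj⟩ := h v
    (Gᶜ.degree_pos_iff_exists_adj v).mpr ⟨w, hne.symm, hnadj⟩
  have hcompl := Gᶜ.card_le_two_mul_card_edgeFinset_of_forall_degree_pos hpos
  have htotal := G.card_edgeFinset_add_card_edgeFinset_compl
  rw [Fintype.card_fin] at hcompl htotal
  have hchoose : (n + 1).choose 2 = n + n.choose 2 := by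
    rw [Nat.choose_succ_succ, Nat.choose_one_right]
  omega

theorem exists_universal_vertex (n m : ℕ) (hm : 1 ≤ m) (hmn : m ≤ n)
    (hhalf : n ≤ 2 * m) (G : SimpleGraph (Fin (n + 1)))
    (hcard : G.edgeFinset.card = n.choose 2 + m) :
    ∃ v : Fin (n + 1), ∀ w : Fin (n + 1), w ≠ v → G.Adj v w :=
  exists_universal_vertex_general n m hhalf G hcard
end

section
/- If N = C(n+1,2) is a triangular number, then the maximum of S(G) over all simple graphs with N edges equals n·C(n+1,2), attained by the complete graph K_{n+1}. -/
/-
Write `S(G) = ∑_{t ≥ 0} e_t`, where `e_t` counts the edges both of whose endpoints have degree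
`> t`, and likewise `2|E| = ∑_v deg v = ∑_{t ≥ 0} k_t`, where `k_t` counts the vertices of degree
`> t`. The `e_t` edges live on `k_t` vertices, so `2 e_t ≤ k_t (k_t - 1)`, and also `e_t ≤ |E|`.
If `|E| ≤ C(n+1, 2)`, either bound gives `2 e_t ≤ n k_t` (the first when `k_t ≤ n + 1`, the
second otherwise), and summing over `t` yields `S(G) ≤ n |E|`. The complete graph `K_{n+1}` is
`n`-regular, so every edge contributes exactly `n`.
-/

open scoped Classical
open Finset

/-- The set of specialties of simple graphs with exactly `N` edges. -/
def specSet (N : ℕ) : Set ℤ :=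
  {s | ∃ (k : ℕ) (G : SimpleGraph (Fin k)),
    G.edgeFinset.card = N ∧ (specialty G : ℤ) = s}

theorem Finset.sum_eq_sum_range_card_filter_lt {α : Type*} {s : Finset α} {w : α → ℕ} {B : ℕ}
    (hw : ∀ a ∈ s, w a ≤ B) : ∑ a ∈ s, w a = ∑ t ∈ range B, #{a ∈ s | t < w a} := by
  simp_rw [card_filter]
  rw [sum_comm]
  refine sum_congr rfl fun a ha => ?_
  have hrange : {t ∈ range B | t < w a} = range (w a) := by
    ext t
    simp only [mem_filter, mem_range]
    exact ⟨And.right, fun ht => ⟨ht.trans_le (hw a ha), ht⟩⟩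
  rw [← card_filter, hrange, card_range]

namespace SimpleGraph

variable {V : Type*} [Fintype V] (G : SimpleGraph V)

theorem sum_degrees_eq_sum_range :
    ∑ v, G.degree v = ∑ t ∈ range (Fintype.card V), #{v | t < G.degree v} :=
  sum_eq_sum_range_card_filter_lt fun v _ => (G.degree_lt_card_verts v).le

theorem specialty_eq_sum_range :
    specialty G =
      ∑ t ∈ range (Fintype.card V), #{e ∈ G.edgeFinset | ∀ v ∈ e, t < G.degree v} := by
  rw [specialty, sum_eq_sum_range_card_filter_lt]
  · refine sum_congr rfl fun t _ => congrArg card (filter_congr fun e _ => ?_)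
    induction e using Sym2.ind with
    | _ u v => simp
  · intro e _
    induction e using Sym2.ind with
    | _ u v => exact (min_le_left _ _).trans (G.degree_lt_card_verts u).le

theorem two_mul_card_filter_edgeFinset_forall_le (p : V → Prop) [DecidablePred p] :
    2 * #{e ∈ G.edgeFinset | ∀ v ∈ e, p v} ≤ #{v | p v} * (#{v | p v} - 1) := by
  rw [Nat.mul_sub_one, ← offDiag_card, ← Sym2.two_mul_card_image_offDiag]
  refine Nat.mul_le_mul_left 2 (card_le_card fun e he => ?_)
  induction e using Sym2.ind with
  | _ u v =>
    simp only [mem_filter, mem_edgeFinset, mem_edgeSet, Sym2.mem_iff, forall_eq_or_imp,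
      forall_eq] at he
    simp only [mem_image, mem_offDiag, mem_filter, mem_univ, true_and, Prod.exists,
      Function.uncurry_apply_pair]
    exact ⟨u, v, ⟨he.2.1, he.2.2, he.1.ne⟩, rfl⟩

theorem two_mul_card_filter_edgeFinset_forall_le_mul {n : ℕ}
    (hE : #G.edgeFinset ≤ (n + 1).choose 2) (p : V → Prop) [DecidablePred p] :
    2 * #{e ∈ G.edgeFinset | ∀ v ∈ e, p v} ≤ n * #{v | p v} := by
  set U : Finset V := {v | p v}
  rcases le_or_gt #U (n + 1) with hU | hU
  · calc 2 * #{e ∈ G.edgeFinset | ∀ v ∈ e, p v} ≤ #U * (#U - 1) :=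
          G.two_mul_card_filter_edgeFinset_forall_le p
      _ ≤ #U * n := Nat.mul_le_mul_left _ (by omega)
      _ = n * #U := mul_comm _ _
  · have htriangle : 2 * (n + 1).choose 2 = n * (n + 1) := by
      rw [mul_comm, ← Nat.add_one_mul_choose_eq, Nat.choose_one_right, mul_comm]
    calc 2 * #{e ∈ G.edgeFinset | ∀ v ∈ e, p v} ≤ 2 * (n + 1).choose 2 :=
          Nat.mul_le_mul_left 2 ((card_filter_le _ _).trans hE)
      _ = n * (n + 1) := htriangle
      _ ≤ n * #U := Nat.mul_le_mul_left n hU.le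

theorem specialty_le_mul_card_edgeFinset {n : ℕ} (hE : #G.edgeFinset ≤ (n + 1).choose 2) :
    specialty G ≤ n * #G.edgeFinset := by
  have h2 : 2 * specialty G ≤ 2 * (n * #G.edgeFinset) :=
    calc 2 * specialty G
        = ∑ t ∈ range (Fintype.card V), 2 * #{e ∈ G.edgeFinset | ∀ v ∈ e, t < G.degree v} := by
          rw [specialty_eq_sum_range, mul_sum]
      _ ≤ ∑ t ∈ range (Fintype.card V), n * #{v | t < G.degree v} :=
          sum_le_sum fun t _ => G.two_mul_card_filter_edgeFinset_forall_le_mul hE _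
      _ = n * ∑ v, G.degree v := by rw [sum_degrees_eq_sum_range, mul_sum]
      _ = 2 * (n * #G.edgeFinset) := by rw [sum_degrees_eq_twice_card_edges, mul_left_comm]
  exact Nat.le_of_mul_le_mul_left h2 two_pos

variable {G} in
theorem IsRegularOfDegree.specialty_eq {d : ℕ} (hG : G.IsRegularOfDegree d) :
    specialty G = d * #G.edgeFinset := by
  rw [specialty, sum_congr rfl, sum_const, smul_eq_mul, mul_comm]
  intro e _
  induction e using Sym2.ind with
  | _ u v => simp [hG.degree_eq]

theorem specialty_top :
    specialty (⊤ : SimpleGraph V) = (Fintype.card V - 1) * (Fintype.card V).choose 2 := by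
  rw [IsRegularOfDegree.specialty_eq (G := ⊤) (d := Fintype.card V - 1) fun v => by simp]
  congr 1
  -- `convert` bridges the classical `DecidableRel` instance inside `specialty` and `Top.adjDecidable`
  convert card_edgeFinset_top_eq_card_choose_two (V := V)

end SimpleGraph

theorem specialty_max_triangular_general (n : ℕ) :
    IsGreatest (specSet ((n + 1).choose 2)) ((n : ℤ) * (n + 1).choose 2) ∧
      specialty (⊤ : SimpleGraph (Fin (n + 1))) = n * (n + 1).choose 2 := by
  have htop : specialty (⊤ : SimpleGraph (Fin (n + 1))) = n * (n + 1).choose 2 := by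
    simpa using SimpleGraph.specialty_top (V := Fin (n + 1))
  refine ⟨⟨⟨n + 1, ⊤, ?_, by exact_mod_cast htop⟩, ?_⟩, htop⟩
  · convert SimpleGraph.card_edgeFinset_top_eq_card_choose_two (V := Fin (n + 1))
    exact (Fintype.card_fin _).symm
  · rintro _ ⟨k, G, hE, rfl⟩
    have hle := G.specialty_le_mul_card_edgeFinset hE.le
    rw [hE] at hle
    exact_mod_cast hle

theorem specialty_max_triangular (n : ℕ) (hn : 1 ≤ n) :
    IsGreatest (specSet ((n + 1).choose 2)) ((n : ℤ) * (n + 1).choose 2) ∧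
      specialty (⊤ : SimpleGraph (Fin (n + 1))) = n * (n + 1).choose 2 :=
  specialty_max_triangular_general n
end

section
/- Let G be a simple graph with a universal vertex v, n+1 vertices, and N = C(n,2)+m edges (1 ≤ m ≤ n). Then S(G) = S(G-v) + 3N - 2n, where G-v denotes the graph obtained by deleting v. -/
/-!
Since `v` is adjacent to everything, its degree `n` dominates every other degree, so the edges
at `v` contribute `∑_{w ≠ v} deg w = 2N - n`. The remaining `N - n` edges are exactly the edges
of `G - v`, and deleting `v` lowers the degree of each of their endpoints by exactly one, so each
of them contributes one more to `S(G)` than to `S(G - v)`.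
-/

open scoped Classical
open Finset

namespace SimpleGraph

variable {V : Type*} [Fintype V] (G : SimpleGraph V)

noncomputable def edgeMinDegree : Sym2 V → ℕ :=
  Sym2.lift ⟨fun u w => min (G.degree u) (G.degree w), fun _ _ => min_comm _ _⟩

@[simp]
theorem edgeMinDegree_mk (u w : V) : G.edgeMinDegree s(u, w) = min (G.degree u) (G.degree w) :=
  rfl

/-- Stated for any `Fintype G.edgeSet` instance, so that it also applies to induced graphs, whose
edge sets carry the `comap` decidability instance rather than the classical one. -/
theorem specialty_eq_sum_edgeMinDegree [Fintype G.edgeSet] :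
    specialty G = ∑ e ∈ G.edgeFinset, G.edgeMinDegree e := by
  unfold specialty
  congr!

theorem image_neighborFinset_eq_filter_mem [DecidableEq V] (v : V) :
    (G.neighborFinset v).image (s(v, ·)) = G.edgeFinset.filter (v ∈ ·) := by
  ext e
  induction e with
  | _ a b =>
    simp only [mem_image, mem_neighborFinset, mem_filter, mem_edgeFinset, mem_edgeSet,
      Sym2.mem_iff]
    constructor
    · rintro ⟨w, hw, he⟩
      rcases Sym2.eq_iff.mp he with ⟨rfl, rfl⟩ | ⟨rfl, rfl⟩
      exacts [⟨hw, .inl rfl⟩, ⟨hw.symm, .inr rfl⟩]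
    · rintro ⟨hab, rfl | rfl⟩
      exacts [⟨b, hab, rfl⟩, ⟨a, hab.symm, Sym2.eq_swap⟩]

theorem map_edgeFinset_induce_compl_singleton [DecidableEq V] (v : V) :
    (G.induce {v}ᶜ).edgeFinset.map (Function.Embedding.subtype (· ∈ ({v}ᶜ : Set V))).sym2Map
      = G.edgeFinset.filter (v ∉ ·) := by
  rw [map_edgeFinset_induce]
  ext e
  simp only [mem_inter, mem_sym2_iff, Set.mem_toFinset, Set.mem_compl_singleton_iff, mem_filter]
  exact and_congr_right fun _ => ⟨fun h hv => h v hv rfl, fun h _ ha hav => h (hav ▸ ha)⟩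

theorem sum_edgeFinset_eq_sum_neighborFinset_add_sum_induce [DecidableEq V] {M : Type*}
    [AddCommMonoid M] (f : Sym2 V → M) (v : V) :
    ∑ e ∈ G.edgeFinset, f e = ∑ w ∈ G.neighborFinset v, f s(v, w) +
      ∑ e ∈ (G.induce {v}ᶜ).edgeFinset, f (e.map (↑)) := by
  rw [← sum_filter_add_sum_filter_not _ (v ∈ ·), ← image_neighborFinset_eq_filter_mem,
    sum_image (fun _ _ _ _ => Sym2.congr_right.mp), ← map_edgeFinset_induce_compl_singleton,
    sum_map]
  rfl

theorem degree_induce_compl_singleton_add_one [DecidableEq V] {v : V} (w : ({v}ᶜ : Set V))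
    (h : G.Adj w v) :
    (G.induce {v}ᶜ).degree w + 1 = G.degree w := by
  rw [← card_neighborFinset_eq_degree, ← card_neighborFinset_eq_degree, ← card_map,
    map_neighborFinset_induce, Set.toFinset_compl, Set.toFinset_singleton, ← sdiff_eq_inter_compl,
    ← erase_eq, card_erase_add_one (G.mem_neighborFinset _ _ |>.mpr h)]

variable {G}

theorem IsUniversal.edgeMinDegree_map_induce [DecidableEq V] {v : V} (hv : G.IsUniversal v)
    (e : Sym2 ({v}ᶜ : Set V)) :
    G.edgeMinDegree (e.map (↑)) = (G.induce {v}ᶜ).edgeMinDegree e + 1 := by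
  induction e with
  | _ a b =>
    have adj_v (x : ({v}ᶜ : Set V)) : G.Adj x v := (hv (Ne.symm x.2)).symm
    rw [Sym2.map_mk, edgeMinDegree_mk, edgeMinDegree_mk, ← min_add_add_right]
    -- `convert` identifies the classical and the `comap` decidability instances on `G.induce`
    congr 1 <;> convert (G.degree_induce_compl_singleton_add_one _ (adj_v _)).symm

theorem IsUniversal.sum_neighborFinset_edgeMinDegree [DecidableEq V] {v : V}
    (hv : G.IsUniversal v) :
    ∑ w ∈ G.neighborFinset v, G.edgeMinDegree s(v, w) + G.degree v = 2 * #G.edgeFinset := by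
  have hdeg : G.degree v = Fintype.card V - 1 := (G.degree_eq_card_sub_one v).mpr hv
  have min_eq (w : V) : min (G.degree v) (G.degree w) = G.degree w :=
    min_eq_right (hdeg ▸ Nat.le_sub_one_of_lt (G.degree_lt_card_verts w))
  simp only [edgeMinDegree_mk, min_eq, (G.neighborFinset_eq_erase_univ v).mpr hv,
    sum_erase_add _ _ (mem_univ v), sum_degrees_eq_twice_card_edges]

theorem IsUniversal.specialty_add_two_mul_degree [DecidableEq V] {v : V}
    (hv : G.IsUniversal v) :
    specialty G + 2 * G.degree v = specialty (G.induce {v}ᶜ) + 3 * #G.edgeFinset := by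
  have card_split := G.sum_edgeFinset_eq_sum_neighborFinset_add_sum_induce (fun _ => 1) v
  have specialty_split := G.sum_edgeFinset_eq_sum_neighborFinset_add_sum_induce G.edgeMinDegree v
  simp only [sum_const, smul_eq_mul, mul_one, card_neighborFinset_eq_degree] at card_split
  simp only [← specialty_eq_sum_edgeMinDegree, hv.edgeMinDegree_map_induce, sum_add_distrib,
    sum_const, smul_eq_mul, mul_one] at specialty_split
  have neighbor_sum := hv.sum_neighborFinset_edgeMinDegree
  omega

end SimpleGraph

theorem specialty_delete_universal_general (n m : ℕ)
    (G : SimpleGraph (Fin (n + 1))) (v : Fin (n + 1))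
    (huniv : ∀ w, w ≠ v → G.Adj v w)
    (hcard : G.edgeFinset.card = n.choose 2 + m) :
    (specialty G : ℤ) =
      specialty (G.induce ({v}ᶜ : Set (Fin (n + 1)))) +
        3 * (n.choose 2 + m) - 2 * n := by
  have hv : G.IsUniversal v := fun w hw => huniv w (Ne.symm hw)
  have hdeg : G.degree v = n := by simpa using (G.degree_eq_card_sub_one v).mpr hv
  have key := hv.specialty_add_two_mul_degree
  rw [hdeg, hcard] at key
  omega

theorem specialty_delete_universal (n m : ℕ) (hm : 1 ≤ m) (hmn : m ≤ n)
    (G : SimpleGraph (Fin (n + 1))) (v : Fin (n + 1))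
    (huniv : ∀ w, w ≠ v → G.Adj v w)
    (hcard : G.edgeFinset.card = n.choose 2 + m) :
    (specialty G : ℤ) =
      specialty (G.induce ({v}ᶜ : Set (Fin (n + 1)))) +
        3 * (n.choose 2 + m) - 2 * n :=
  specialty_delete_universal_general n m G v huniv hcard
end

section
/- The graph formed by K_{n+1,n+1} with 2n+1-m disjoint edges removed (where n+1 ≤ m ≤ 2n+1) has specialty S(G) = n³ + n² + m(m-n). -/
open scoped Classical
open Finset

/-- `K_{n+1,n+1}` with the `2n + 1 - m` disjoint edges `(inl i, inr i)`,
`i < 2n + 1 - m`, removed. -/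
def completeBipartiteMinusMatching (n m : ℕ) :
    SimpleGraph (Fin (n + 1) ⊕ Fin (n + 1)) where
  Adj u v :=
    (∃ (a b : Fin (n + 1)), u = Sum.inl a ∧ v = Sum.inr b ∧
      ¬(a = b ∧ (a : ℕ) < 2 * n + 1 - m)) ∨
    (∃ (a b : Fin (n + 1)), v = Sum.inl a ∧ u = Sum.inr b ∧
      ¬(a = b ∧ (a : ℕ) < 2 * n + 1 - m))
  symm := by
    constructor
    rintro u v (⟨a, b, rfl, rfl, h⟩ | ⟨a, b, rfl, rfl, h⟩)
    · exact Or.inr ⟨a, b, rfl, rfl, h⟩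
    · exact Or.inl ⟨a, b, rfl, rfl, h⟩
  loopless := by
    constructor
    rintro u (⟨a, b, rfl, h, _⟩ | ⟨a, b, h, rfl, _⟩) <;> simp at h

/-!
With `k = 2n + 1 - m`, the `k` vertices on each side that lost their matching edge have degree
`n` and the others degree `n + 1`. So every edge contributes `n`, plus `1` exactly when both
endpoints are untouched: `S = ((n + 1)² - k) n + (n + 1 - k)²`, and `n + 1 - k = m - n`.
-/

open SimpleGraph Sum

theorem Finset.card_filter_ne_or {α : Type*} [Fintype α] [DecidableEq α] (a : α) (P : α → Prop)
    [DecidablePred P] : #{b | b ≠ a ∨ P b} = Fintype.card α - 1 + if P a then 1 else 0 := by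
  by_cases h : P a
  · rw [filter_true_of_mem fun b _ ↦ not_or_of_imp fun hb ↦ hb ▸ h, card_univ, if_pos h,
      Nat.sub_add_cancel (Fintype.card_pos_iff.2 ⟨a⟩)]
  · rw [filter_congr fun b _ ↦ or_iff_left_of_imp fun hb ↦ by rintro rfl; exact h hb,
      filter_ne', card_erase_of_mem (mem_univ a), card_univ, if_neg h, add_zero]

namespace Fin

variable (N k : ℕ)

theorem card_filter_le_val : #{i : Fin N | k ≤ i} = N - k := by
  have := card_filter_add_card_filter_not (s := univ) (p := fun i : Fin N ↦ (i : ℕ) < k)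
  simp_rw [not_lt, card_filter_val_lt, card_univ, Fintype.card_fin] at this
  omega

theorem card_filter_le_fst_and_le_snd :
    #{p : Fin N × Fin N | k ≤ p.1 ∧ k ≤ p.2} = (N - k) ^ 2 := by
  rw [← univ_product_univ,
    filter_product (fun i : Fin N ↦ k ≤ (i : ℕ)) (fun i : Fin N ↦ k ≤ (i : ℕ)), card_product,
    card_filter_le_val, sq]

theorem card_filter_ne_or_le_fst_add_min :
    #{p : Fin N × Fin N | p.1 ≠ p.2 ∨ k ≤ p.1} + min N k = N ^ 2 := by
  have hdiag : #{p : Fin N × Fin N | ¬(p.1 ≠ p.2 ∨ k ≤ p.1)} = min N k := by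
    simp_rw [not_or, not_not, not_le]
    rw [← card_filter_val_lt, ← diag_card (s := {i : Fin N | i < k})]
    congr 1 with ⟨a, b⟩
    simp [mem_diag, and_comm]
  rw [← hdiag, card_filter_add_card_filter_not, card_univ, Fintype.card_prod, Fintype.card_fin,
    sq]

end Fin

section Bipartite

variable {α β : Type*} [Fintype α] [Fintype β] {G : SimpleGraph (α ⊕ β)}

theorem SimpleGraph.sum_edgeFinset_of_le_completeBipartiteGraph {M : Type*} [AddCommMonoid M]
    (hG : G ≤ completeBipartiteGraph α β) (f : Sym2 (α ⊕ β) → M) :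
    ∑ e ∈ G.edgeFinset, f e =
      ∑ p : α × β with G.Adj (inl p.1) (inr p.2), f s(inl p.1, inr p.2) := by
  symm
  apply sum_bij (fun p _ ↦ s(inl p.1, inr p.2)) (fun p hp ↦ by simpa using hp)
    (fun p _ q _ hpq ↦ by simpa [Prod.ext_iff] using hpq)
  · intro e he
    induction e with | _ u v
    rw [mem_edgeFinset, mem_edgeSet] at he
    have huv := hG he
    rcases u with a | a <;> rcases v with b | b <;> simp at huv
    · exact ⟨(a, b), by simpa using he, rfl⟩
    · exact ⟨(b, a), by simpa using he.symm, Sym2.eq_swap⟩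
  · simp

theorem SimpleGraph.degree_inl_of_le_completeBipartiteGraph
    (hG : G ≤ completeBipartiteGraph α β) (a : α) :
    G.degree (inl a) = #{b | G.Adj (inl a) (inr b)} := by
  rw [← card_neighborFinset_eq_degree, neighborFinset_eq_filter, card_filter, card_filter,
    Fintype.sum_sum_type, sum_eq_zero fun _ _ ↦ if_neg fun h ↦ by simpa using hG h, zero_add]

theorem SimpleGraph.degree_inr_of_le_completeBipartiteGraph
    (hG : G ≤ completeBipartiteGraph α β) (b : β) :
    G.degree (inr b) = #{a | G.Adj (inl a) (inr b)} := by
  rw [← card_neighborFinset_eq_degree, neighborFinset_eq_filter, card_filter, card_filter,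
    Fintype.sum_sum_type, sum_eq_zero (s := (univ : Finset β)) fun _ _ ↦
      if_neg fun h ↦ by simpa using hG h, add_zero]
  simp_rw [adj_comm]

theorem specialty_eq_sum_of_le_completeBipartiteGraph (hG : G ≤ completeBipartiteGraph α β) :
    specialty G = ∑ p : α × β with G.Adj (inl p.1) (inr p.2),
      min (G.degree (inl p.1)) (G.degree (inr p.2)) :=
  sum_edgeFinset_of_le_completeBipartiteGraph hG _

end Bipartite

section Matching

variable {n m : ℕ}

theorem completeBipartiteMinusMatching_le :
    completeBipartiteMinusMatching n m ≤ completeBipartiteGraph (Fin (n + 1)) (Fin (n + 1)) := by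
  rintro u v (⟨a, b, rfl, rfl, -⟩ | ⟨a, b, rfl, rfl, -⟩) <;> simp

theorem completeBipartiteMinusMatching_adj_inl_inr (a b : Fin (n + 1)) :
    (completeBipartiteMinusMatching n m).Adj (inl a) (inr b) ↔ a ≠ b ∨ 2 * n + 1 - m ≤ a := by
  simp [completeBipartiteMinusMatching, imp_iff_not_or]

theorem degree_completeBipartiteMinusMatching_inl (a : Fin (n + 1)) :
    (completeBipartiteMinusMatching n m).degree (inl a) =
      n + if 2 * n + 1 - m ≤ a then 1 else 0 := by
  simp_rw [degree_inl_of_le_completeBipartiteGraph completeBipartiteMinusMatching_le,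
    completeBipartiteMinusMatching_adj_inl_inr, ne_comm (a := a)]
  rw [card_filter_ne_or a fun _ ↦ 2 * n + 1 - m ≤ a, Fintype.card_fin, Nat.add_sub_cancel]

theorem degree_completeBipartiteMinusMatching_inr (b : Fin (n + 1)) :
    (completeBipartiteMinusMatching n m).degree (inr b) =
      n + if 2 * n + 1 - m ≤ b then 1 else 0 := by
  simp_rw [degree_inr_of_le_completeBipartiteGraph completeBipartiteMinusMatching_le,
    completeBipartiteMinusMatching_adj_inl_inr]
  rw [card_filter_ne_or b (2 * n + 1 - m ≤ ·), Fintype.card_fin, Nat.add_sub_cancel]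

theorem specialty_completeBipartiteMinusMatching_eq :
    specialty (completeBipartiteMinusMatching n m) =
      #{p : Fin (n + 1) × Fin (n + 1) | p.1 ≠ p.2 ∨ 2 * n + 1 - m ≤ p.1} * n +
        (n + 1 - (2 * n + 1 - m)) ^ 2 := by
  have hmin (P Q : Prop) [Decidable P] [Decidable Q] :
      min (n + if P then 1 else 0) (n + if Q then 1 else 0) = n + if P ∧ Q then 1 else 0 := by
    by_cases P <;> by_cases Q <;> simp [*]
  rw [specialty_eq_sum_of_le_completeBipartiteGraph completeBipartiteMinusMatching_le]
  simp_rw [completeBipartiteMinusMatching_adj_inl_inr, degree_completeBipartiteMinusMatching_inl,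
    degree_completeBipartiteMinusMatching_inr, hmin, sum_add_distrib, sum_const, smul_eq_mul,
    sum_boole, Nat.cast_id, filter_filter, and_iff_right_of_imp (Or.inr ∘ And.left),
    Fin.card_filter_le_fst_and_le_snd]

end Matching

theorem specialty_completeBipartiteMinusMatching (n m : ℕ) (h1 : n + 1 ≤ m)
    (h2 : m ≤ 2 * n + 1) :
    specialty (completeBipartiteMinusMatching n m) =
      n ^ 3 + n ^ 2 + m * (m - n) := by
  obtain ⟨j, k, rfl, rfl⟩ : ∃ j k, n = j + k ∧ m = 2 * j + k + 1 :=
    ⟨m - n - 1, 2 * n + 1 - m, by omega, by omega⟩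
  have hcard := Fin.card_filter_ne_or_le_fst_add_min (j + k + 1) k
  rw [min_eq_right (by omega)] at hcard
  rw [specialty_completeBipartiteMinusMatching_eq,
    show 2 * (j + k) + 1 - (2 * j + k + 1) = k by omega, show j + k + 1 - k = j + 1 by omega,
    show 2 * j + k + 1 - (j + k) = j + 1 by omega]
  linear_combination (j + k) * hcard
end

section
/- For every tree G with N ≥ 2 edges and maximum degree Δ, S(G) ≤ 2N - Δ. -/
open scoped Classical
open Finset

/-!
Root the tree at a vertex `r`. Every edge joins some vertex `w ≠ r` to its parent, the last
vertex before `w` on the path from `r`; charging the edge's term `min (deg u) (deg v)` to `deg w`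
gives `S(G) ≤ ∑_{w ≠ r} deg w = 2N - deg r`. Take `deg r = Δ`.
-/

namespace SimpleGraph

variable {V : Type*} {G : SimpleGraph V}

lemma IsAcyclic.eq_penultimate_of_adj_of_dist_lt (hG : G.IsAcyclic) {r x y : V}
    {p : G.Walk r x} (hp : p.IsPath) (hadj : G.Adj x y) (hry : G.Reachable r y)
    (hlt : G.dist r y < G.dist r x) : y = p.penultimate := by
  obtain ⟨q, hq, hqlen⟩ := hry.exists_path_of_dist
  have hx : x ∉ q.support := fun hx => by
    have := (G.dist_le (q.takeUntil x hx)).trans (q.length_takeUntil_le_length hx)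
    omega
  exact hG.eq_penultimate_of_adj_end hp hadj
    (hG.mem_support_of_ne_mem_support_of_adj_of_isPath hp hq hadj hx)

lemma IsTree.exists_forall_edge_eq_parent (hG : G.IsTree) (r : V) :
    ∃ π : V → V, ∀ e ∈ G.edgeSet, ∃ w ≠ r, e = s(w, π w) := by
  choose p hp using fun w => (hG.existsUnique_path r w).exists
  have edge_eq_parent {x y : V} (hadj : G.Adj x y) (hdist : G.dist r x = G.dist r y + 1) :
      ∃ w ≠ r, s(x, y) = s(w, (p w).penultimate) := by
    refine ⟨x, fun hxr => by simp [hxr] at hdist, ?_⟩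
    rw [← hG.isAcyclic.eq_penultimate_of_adj_of_dist_lt (hp x) hadj (hG.connected r y)
      (by omega)]
  refine ⟨fun w => (p w).penultimate, ?_⟩
  refine Sym2.ind fun x y hxy => ?_
  rcases hG.dist_eq_dist_add_one_of_adj r hxy with hdist | hdist
  · exact edge_eq_parent hxy hdist
  · rw [Sym2.eq_swap]
    exact edge_eq_parent hxy.symm hdist

variable [Fintype V]

lemma specialty_add_degree_le_sum_degree {r : V} {π : V → V}
    (hcover : ∀ e ∈ G.edgeSet, ∃ w ≠ r, e = s(w, π w)) :
    specialty G + G.degree r ≤ ∑ v, G.degree v := by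
  set F : Sym2 V → ℕ := Sym2.lift ⟨fun u v => min (G.degree u) (G.degree v),
    fun u v => min_comm (G.degree u) (G.degree v)⟩
  have hsub : G.edgeFinset ⊆ ({r}ᶜ : Finset V).image fun w => s(w, π w) := by
    intro e he
    obtain ⟨w, hwr, rfl⟩ := hcover e (mem_edgeFinset.mp he)
    exact mem_image_of_mem _ (by simpa using hwr)
  calc specialty G + G.degree r
      ≤ ∑ e ∈ ({r}ᶜ : Finset V).image (fun w => s(w, π w)), F e + G.degree r := by
        gcongr
        exact sum_le_sum_of_subset hsub
    _ ≤ ∑ w ∈ ({r}ᶜ : Finset V), F s(w, π w) + G.degree r := by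
        gcongr
        exact sum_image_le_of_nonneg fun _ _ => Nat.zero_le _
    _ ≤ ∑ w ∈ ({r}ᶜ : Finset V), G.degree w + G.degree r := by
        gcongr
        exact min_le_left _ _
    _ = ∑ v, G.degree v := sum_compl_add_sum {r} _

end SimpleGraph

theorem tree_specialty_le_general (N : ℕ) (G : SimpleGraph (Fin (N + 1)))
    (htree : G.IsTree) (hcard : G.edgeFinset.card = N) (Δ : ℕ)
    (hΔmem : ∃ v, G.degree v = Δ) :
    (specialty G : ℤ) ≤ 2 * N - Δ := by
  obtain ⟨r, rfl⟩ := hΔmem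
  obtain ⟨π, hcover⟩ := htree.exists_forall_edge_eq_parent r
  have h := SimpleGraph.specialty_add_degree_le_sum_degree hcover
  rw [SimpleGraph.sum_degrees_eq_twice_card_edges, hcard] at h
  omega

theorem tree_specialty_le (N : ℕ) (hN : 2 ≤ N) (G : SimpleGraph (Fin (N + 1)))
    (htree : G.IsTree) (hcard : G.edgeFinset.card = N) (Δ : ℕ)
    (hΔmax : ∀ v, G.degree v ≤ Δ) (hΔmem : ∃ v, G.degree v = Δ) :
    (specialty G : ℤ) ≤ 2 * N - Δ :=
  tree_specialty_le_general N G htree hcard Δ hΔmem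
end

section
/- Suppose G is a class of simple graphs such that every subgraph of a graph in G has average degree at most Δ. Then every graph G in G with N edges satisfies S(G) ≤ Δ·N. -/
open scoped Classical
open Finset

/-!
Layer-cake decomposition by degree: with `V_k = {v | k ≤ deg v}`, the weight
`min (deg u) (deg v)` of an edge `uv` counts the `k ≥ 1` with `u, v ∈ V_k`, so
`S(G) = ∑_{k ≥ 1} e(G[V_k])`, while likewise `∑_{k ≥ 1} |V_k| = ∑_v deg v = 2N`.
The average-degree bound for the induced subgraphs `G[V_k]` gives
`2 e(G[V_k]) ≤ Δ |V_k|` for every `k`, and summing over `k` gives `2 S(G) ≤ 2 Δ N`.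
-/

namespace Finset

theorem sum_eq_sum_Icc_card_filter_le {α : Type*} {s : Finset α} {f : α → ℕ} {K : ℕ}
    (hf : ∀ x ∈ s, f x ≤ K) :
    ∑ x ∈ s, f x = ∑ k ∈ Icc 1 K, #{x ∈ s | k ≤ f x} := by
  refine Eq.trans ?_ (sum_card_bipartiteAbove_eq_sum_card_bipartiteBelow fun x k => k ≤ f x)
  refine sum_congr rfl fun x hx => ?_
  have hlayers : (Icc 1 K).bipartiteAbove (fun x k => k ≤ f x) x = Icc 1 (f x) := by
    ext k
    simp only [mem_bipartiteAbove, mem_Icc]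
    have := hf x hx
    omega
  rw [hlayers, Nat.card_Icc, Nat.add_sub_cancel]

end Finset

namespace SimpleGraph

variable {V : Type*} (G : SimpleGraph V)

theorem Subgraph.edgeSet_induce_top (s : Set V) :
    ((⊤ : G.Subgraph).induce s).edgeSet = {e ∈ G.edgeSet | ∀ v ∈ e, v ∈ s} := by
  ext e
  induction e with
  | h u v => simp [and_comm, and_assoc]

variable [Fintype V]

theorem specialty_eq_sum_card_filter :
    specialty G = ∑ k ∈ Icc 1 G.maxDegree, #{e ∈ G.edgeFinset | ∀ v ∈ e, k ≤ G.degree v} := by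
  rw [specialty, sum_eq_sum_Icc_card_filter_le]
  · refine sum_congr rfl fun k _ => congrArg card <| filter_congr fun e _ => ?_
    induction e with
    | h u v => simp
  · intro e _
    induction e with
    | h u v => exact (min_le_left _ _).trans (G.degree_le_maxDegree u)

theorem two_mul_card_edgeFinset_eq_sum_card_filter :
    2 * #G.edgeFinset = ∑ k ∈ Icc 1 G.maxDegree, #{v | k ≤ G.degree v} := by
  rw [← sum_degrees_eq_twice_card_edges]
  exact sum_eq_sum_Icc_card_filter_le fun v _ => G.degree_le_maxDegree v

theorem two_mul_card_edgeFinset_filter_le {Δ : ℚ}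
    (havg : ∀ H : G.Subgraph, H.verts.Nonempty →
      2 * (H.edgeSet.ncard : ℚ) ≤ Δ * H.verts.ncard) (p : V → Prop) [DecidablePred p] :
    2 * (#{e ∈ G.edgeFinset | ∀ v ∈ e, p v} : ℚ) ≤ Δ * #{v | p v} := by
  rcases (filter p univ).eq_empty_or_nonempty with hp | hp
  · have hE : filter (fun e => ∀ v ∈ e, p v) G.edgeFinset = ∅ :=
      filter_eq_empty_iff.2 fun e _ he =>
        filter_eq_empty_iff.1 hp (mem_univ _) (he _ e.out_fst_mem)
    simp [hp, hE]
  · have h := havg ((⊤ : G.Subgraph).induce {v | p v})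
      (by simpa [Finset.Nonempty, Set.Nonempty] using hp)
    rw [Subgraph.edgeSet_induce_top] at h
    convert h using 3 <;> rw [← Set.ncard_coe_finset] <;> congr 1 <;> ext <;> simp

end SimpleGraph

theorem specialty_le_of_avg_degree_bound {V : Type*} [Fintype V]
    (G : SimpleGraph V) (Δ : ℚ)
    (havg : ∀ H : G.Subgraph, H.verts.Nonempty →
      2 * (H.edgeSet.ncard : ℚ) ≤ Δ * H.verts.ncard) :
    (specialty G : ℚ) ≤ Δ * G.edgeFinset.card := by
  have h : 2 * (specialty G : ℚ) ≤ Δ * ((2 * #G.edgeFinset : ℕ) : ℚ) := by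
    rw [G.specialty_eq_sum_card_filter, G.two_mul_card_edgeFinset_eq_sum_card_filter]
    push_cast
    rw [mul_sum, mul_sum]
    exact sum_le_sum fun k _ => G.two_mul_card_edgeFinset_filter_le havg (k ≤ G.degree ·)
  push_cast at h
  linarith
end
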